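/- (Two-sided estimate for the minimum of a rational function.) Let p and q be polynomials in n variables of degree ≤ l with Bernstein coefficients of degree l on the standard simplex Δ, with b_α(q,l,Δ) > 0 for all |α| = l; let f = p/q with rational coefficients b_α(f,l,Δ) = b_α(p,l,Δ)/b_α(q,l,Δ). Let m = min_{|α|=l} b_α(f,l,Δ), attained at a multi-index α* with |α*| = l, and define δ = min( f(v_{α*}(l,Δ)), min_{i=0,…,n} b_{l·eᵢ}(f,l,Δ) ), where v_{α*}(l,Δ) is the grid point of α* and l·eᵢ are the vertex multi-indices. Then m ≤ min_{x∈Δ} f(x) ≤ δ. -/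

import Mathlib

open Finset

noncomputable section

/-- The standard simplex Δ in ℝⁿ. -/
def stdSimp (n : ℕ) : Set (Fin n → ℝ) :=
  {x | (∀ i, 0 ≤ x i) ∧ ∑ i, x i ≤ 1}

/-- Multi-indices α ∈ ℕ^{n+1} with |α| = k. -/
def multIdx (n k : ℕ) : Finset (Fin (n+1) → ℕ) :=
  Finset.Nat.antidiagonalTuple (n+1) k

lemma multIdx_nonempty (n k : ℕ) : (multIdx n k).Nonempty :=
  ⟨fun i => if i = 0 then k else 0, by
    simp [multIdx, Finset.Nat.mem_antidiagonalTuple]⟩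

/-- Bernstein basis polynomial of degree k on the standard simplex. -/
def bern (n k : ℕ) (α : Fin (n+1) → ℕ) (x : Fin n → ℝ) : ℝ :=
  ((k.factorial : ℝ) / ∏ i, ((α i).factorial : ℝ)) *
    (∏ i : Fin n, x i ^ α i.succ) * (1 - ∑ i, x i) ^ α 0

/-- i-th standard unit multi-index. -/
def unitIdx (n : ℕ) (i : Fin (n+1)) : Fin (n+1) → ℕ :=
  fun j => if j = i then 1 else 0

/-- vertex multi-index k·eᵢ -/
def vertIdx (n k : ℕ) (i : Fin (n+1)) : Fin (n+1) → ℕ :=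
  fun j => if j = i then k else 0

/-- second difference -/
def secondDiff (n : ℕ) (b : (Fin (n+1) → ℕ) → ℝ) (γ : Fin (n+1) → ℕ)
    (i j : Fin (n+1)) : ℝ :=
  b (γ + unitIdx n i + unitIdx n (j - 1)) + b (γ + unitIdx n (i - 1) + unitIdx n j)
    - b (γ + unitIdx n (i - 1) + unitIdx n (j - 1)) - b (γ + unitIdx n i + unitIdx n j)

/-!
On Δ the Bernstein basis is nonnegative and never vanishes identically, so the positive
coefficients of q make q > 0 there, and f(x) = (Σ b_α B_α(x)) / (Σ c_α B_α(x)) is a weighted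
mediant of the ratios b_α / c_α; hence f ≥ m on Δ. For the upper bound, the grid point of α* lies
in Δ, and at the i-th vertex of Δ the basis reduces to the Kronecker delta at l·eᵢ, so f takes
the value b_{l·eᵢ} / c_{l·eᵢ} there.
-/

lemma le_sum_mul_div_sum_mul {ι K : Type*} [Field K] [LinearOrder K] [IsStrictOrderedRing K]
    {s : Finset ι} {b c w : ι → K} {m : K} (hm : ∀ i ∈ s, m * c i ≤ b i)
    (hw : ∀ i ∈ s, 0 ≤ w i) (hpos : 0 < ∑ i ∈ s, c i * w i) :
    m ≤ (∑ i ∈ s, b i * w i) / ∑ i ∈ s, c i * w i := by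
  rw [le_div_iff₀ hpos, Finset.mul_sum]
  refine Finset.sum_le_sum fun i hi => ?_
  rw [← mul_assoc]
  exact mul_le_mul_of_nonneg_right (hm i hi) (hw i hi)

lemma mem_multIdx {n k : ℕ} {α : Fin (n+1) → ℕ} :
    α ∈ multIdx n k ↔ ∑ i, α i = k := Finset.Nat.mem_antidiagonalTuple

lemma vertIdx_mem_multIdx (n k : ℕ) (i : Fin (n+1)) : vertIdx n k i ∈ multIdx n k := by
  simp [mem_multIdx, vertIdx]

lemma exists_ne_apply_ne_zero_of_ne_vertIdx {n k : ℕ} {α : Fin (n+1) → ℕ} {i : Fin (n+1)}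
    (hα : α ∈ multIdx n k) (hne : α ≠ vertIdx n k i) : ∃ j ≠ i, α j ≠ 0 := by
  by_contra! hzero
  have hsum : ∑ j, α j = α i := Finset.sum_eq_single i (fun j _ hj => hzero j hj) (by simp)
  refine hne (funext fun j => ?_)
  by_cases hji : j = i
  · subst hji; simp [vertIdx, ← hsum, mem_multIdx.mp hα]
  · simp [vertIdx, hji, hzero j hji]

lemma mem_stdSimp_grid {n l : ℕ} {α : Fin (n+1) → ℕ} (hα : α ∈ multIdx n l) :
    (fun j : Fin n => (α j.succ : ℝ) / l) ∈ stdSimp n := by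
  refine ⟨fun j => by positivity, ?_⟩
  rcases Nat.eq_zero_or_pos l with rfl | hl
  · simp
  · have hle : ∑ j : Fin n, α j.succ ≤ l := by
      rw [← mem_multIdx.mp hα, Fin.sum_univ_succ]; omega
    rw [← Finset.sum_div, div_le_one (by exact_mod_cast hl)]
    exact_mod_cast hle

/-- The vertex `eᵢ` of `Δ`, with `i = 0` the origin. -/
def corner (n : ℕ) (i : Fin (n+1)) : Fin n → ℝ := fun j => if j.succ = i then 1 else 0

lemma sum_corner (n : ℕ) (i : Fin (n+1)) :
    ∑ j, corner n i j = if i = 0 then 0 else 1 := by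
  induction i using Fin.cases with
  | zero => simp [corner, Fin.succ_ne_zero]
  | succ k => simp [corner, Fin.succ_inj, Fin.succ_ne_zero k]

lemma corner_mem_stdSimp (n : ℕ) (i : Fin (n+1)) : corner n i ∈ stdSimp n := by
  refine ⟨fun j => ?_, ?_⟩
  · unfold corner; split <;> norm_num
  · rw [sum_corner]; split <;> norm_num

lemma bern_nonneg {n k : ℕ} (α : Fin (n+1) → ℕ) {x : Fin n → ℝ} (hx : x ∈ stdSimp n) :
    0 ≤ bern n k α x := by
  obtain ⟨hx0, hx1⟩ := hx
  have hprod : 0 ≤ ∏ i : Fin n, x i ^ α i.succ :=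
    Finset.prod_nonneg fun i _ => pow_nonneg (hx0 i) _
  unfold bern
  have : 0 ≤ 1 - ∑ i, x i := by linarith
  positivity

lemma prod_factorial_vertIdx (n l : ℕ) (i : Fin (n+1)) :
    ∏ j, ((vertIdx n l i j).factorial : ℝ) = l.factorial := by
  simp [vertIdx, apply_ite Nat.factorial, Finset.prod_ite_eq']

lemma bern_vertIdx_zero (n l : ℕ) (x : Fin n → ℝ) :
    bern n l (vertIdx n l 0) x = (1 - ∑ i, x i) ^ l := by
  have hsucc : ∀ j : Fin n, vertIdx n l 0 j.succ = 0 := fun j => if_neg (Fin.succ_ne_zero j)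
  rw [bern, prod_factorial_vertIdx, show vertIdx n l 0 0 = l from if_pos rfl]
  simp [hsucc, Nat.factorial_ne_zero]

lemma bern_vertIdx_succ (n l : ℕ) (k : Fin n) (x : Fin n → ℝ) :
    bern n l (vertIdx n l k.succ) x = x k ^ l := by
  have hsucc : ∀ j : Fin n, vertIdx n l k.succ j.succ = if j = k then l else 0 := by
    intro j; simp [vertIdx, Fin.succ_inj]
  rw [bern, prod_factorial_vertIdx, show vertIdx n l k.succ 0 = 0 from
    if_neg (Fin.succ_ne_zero k).symm]
  simp [hsucc, Finset.prod_ite_eq', Nat.factorial_ne_zero]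

lemma exists_bern_pos {n l : ℕ} {x : Fin n → ℝ} (hx : x ∈ stdSimp n) :
    ∃ α ∈ multIdx n l, 0 < bern n l α x := by
  obtain ⟨hx0, hx1⟩ := hx
  rcases hx1.lt_or_eq with hlt | heq
  · exact ⟨_, vertIdx_mem_multIdx n l 0, by
      rw [bern_vertIdx_zero]; exact pow_pos (by linarith) l⟩
  · obtain ⟨k, hk⟩ : ∃ k, 0 < x k := by
      by_contra! hle
      have : ∑ i, x i = 0 := Finset.sum_eq_zero fun i _ => le_antisymm (hle i) (hx0 i)
      linarith
    exact ⟨_, vertIdx_mem_multIdx n l k.succ, by rw [bern_vertIdx_succ]; positivity⟩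

lemma sum_mul_bern_pos {n l : ℕ} {c : (Fin (n+1) → ℕ) → ℝ} (hc : ∀ α ∈ multIdx n l, 0 < c α)
    {x : Fin n → ℝ} (hx : x ∈ stdSimp n) :
    0 < ∑ α ∈ multIdx n l, c α * bern n l α x := by
  obtain ⟨α, hα, hpos⟩ := exists_bern_pos (l := l) hx
  exact Finset.sum_pos' (fun β hβ => mul_nonneg (hc β hβ).le (bern_nonneg β hx))
    ⟨α, hα, mul_pos (hc α hα) hpos⟩

lemma bern_corner {n l : ℕ} (i : Fin (n+1)) {α : Fin (n+1) → ℕ} (hα : α ∈ multIdx n l) :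
    bern n l α (corner n i) = if α = vertIdx n l i then 1 else 0 := by
  split_ifs with h
  · subst h
    induction i using Fin.cases with
    | zero => simp [bern_vertIdx_zero, sum_corner]
    | succ k => simp [bern_vertIdx_succ, corner]
  · obtain ⟨j, hji, hj⟩ := exists_ne_apply_ne_zero_of_ne_vertIdx hα h
    unfold bern
    induction j using Fin.cases with
    | zero =>
      rw [sum_corner, if_neg (Ne.symm hji)]
      simp [zero_pow hj]
    | succ k =>
      rw [Finset.prod_eq_zero (Finset.mem_univ k) (by rw [corner, if_neg hji, zero_pow hj]),
        mul_zero, zero_mul]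

lemma sum_mul_bern_corner (n l : ℕ) (i : Fin (n+1)) (b : (Fin (n+1) → ℕ) → ℝ) :
    ∑ α ∈ multIdx n l, b α * bern n l α (corner n i) = b (vertIdx n l i) := by
  rw [Finset.sum_congr rfl fun α hα => by rw [bern_corner i hα]]
  simp [vertIdx_mem_multIdx]

theorem stmt15_general (n l : ℕ)
    (p q : (Fin n → ℝ) → ℝ) (b c : (Fin (n+1) → ℕ) → ℝ)
    (hrepp : ∀ x, p x = ∑ α ∈ multIdx n l, b α * bern n l α x)
    (hrepq : ∀ x, q x = ∑ α ∈ multIdx n l, c α * bern n l α x)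
    (hc : ∀ α ∈ multIdx n l, 0 < c α)
    (αs : Fin (n+1) → ℕ) (hαs : αs ∈ multIdx n l)
    (m : ℝ) (hm : m = (multIdx n l).inf' (multIdx_nonempty n l) (fun α => b α / c α))
    (δ : ℝ)
    (hδ : δ = min
      (p (fun i => (αs i.succ : ℝ) / l) / q (fun i => (αs i.succ : ℝ) / l))
      ((Finset.univ : Finset (Fin (n+1))).inf' Finset.univ_nonempty
        (fun i => b (vertIdx n l i) / c (vertIdx n l i)))) :
    m ≤ sInf ((fun x => p x / q x) '' stdSimp n) ∧
    sInf ((fun x => p x / q x) '' stdSimp n) ≤ δ := by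
  have hlower : ∀ y ∈ (fun x => p x / q x) '' stdSimp n, m ≤ y := by
    rintro _ ⟨x, hx, rfl⟩
    dsimp only
    rw [hrepp, hrepq]
    refine le_sum_mul_div_sum_mul (fun α hα => ?_) (fun α _ => bern_nonneg α hx)
      (sum_mul_bern_pos hc hx)
    rw [← le_div_iff₀ (hc α hα), hm]
    exact Finset.inf'_le _ hα
  have hbdd : BddBelow ((fun x => p x / q x) '' stdSimp n) := ⟨m, hlower⟩
  refine ⟨le_csInf ⟨_, corner n 0, corner_mem_stdSimp n 0, rfl⟩ hlower, ?_⟩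
  obtain ⟨i, -, hi⟩ := Finset.exists_mem_eq_inf' Finset.univ_nonempty
    (fun i => b (vertIdx n l i) / c (vertIdx n l i))
  have hvertex : p (corner n i) / q (corner n i) = b (vertIdx n l i) / c (vertIdx n l i) := by
    rw [hrepp, hrepq, sum_mul_bern_corner, sum_mul_bern_corner]
  rw [hδ, hi, ← hvertex]
  exact le_min (csInf_le hbdd ⟨_, mem_stdSimp_grid hαs, rfl⟩)
    (csInf_le hbdd ⟨_, corner_mem_stdSimp n i, rfl⟩)

/-- two-sided estimate for the minimum of a rational function. -/
theorem stmt15 (n l : ℕ) (hn : 1 ≤ n)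
    (p q : (Fin n → ℝ) → ℝ) (b c : (Fin (n+1) → ℕ) → ℝ)
    (hrepp : ∀ x, p x = ∑ α ∈ multIdx n l, b α * bern n l α x)
    (hrepq : ∀ x, q x = ∑ α ∈ multIdx n l, c α * bern n l α x)
    (hc : ∀ α ∈ multIdx n l, 0 < c α)
    (αs : Fin (n+1) → ℕ) (hαs : αs ∈ multIdx n l)
    (m : ℝ) (hm : m = (multIdx n l).inf' (multIdx_nonempty n l) (fun α => b α / c α))
    (hattain : b αs / c αs = m)
    (δ : ℝ)
    (hδ : δ = min
      (p (fun i => (αs i.succ : ℝ) / l) / q (fun i => (αs i.succ : ℝ) / l))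
      ((Finset.univ : Finset (Fin (n+1))).inf' Finset.univ_nonempty
        (fun i => b (vertIdx n l i) / c (vertIdx n l i)))) :
    m ≤ sInf ((fun x => p x / q x) '' stdSimp n) ∧
    sInf ((fun x => p x / q x) '' stdSimp n) ≤ δ :=
  stmt15_general n l p q b c hrepp hrepq hc αs hαs m hm δ hδ
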